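/- arXiv:1312.3553 — 2 statements merged into one kernel-verified Lean document; each statement's English description precedes it below -/
import Mathlib

section
/- For integers k ≥ 2 and n ≥ 2k, L(k,n) = k·F(k, n-(2k-1)) + F(k, n-k). -/
def genFib (k n : ℕ) : ℕ :=
  if h1 : n < k then n + 1
  else if h2 : k = 0 then 0
  else genFib k (n - 1) + genFib k (n - k)
  termination_by n
  decreasing_by all_goals omega

def genLucas (k n : ℕ) : ℕ :=
  if n < 2 * k then n + 1
  else (k - 1) * genFib k (n - (2 * k - 1)) + genFib k (n - (k - 1))

theorem genFib_of_le {k n : ℕ} (hk : 0 < k) (hkn : k ≤ n) :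
    genFib k n = genFib k (n - 1) + genFib k (n - k) := by
  rw [genFib, dif_neg (by omega), dif_neg (by omega)]

theorem stmt6 (k n : ℕ) (hk : 2 ≤ k) (hn : 2 * k ≤ n) :
    genLucas k n = k * genFib k (n - (2 * k - 1)) + genFib k (n - k) := by
  rw [genLucas, if_neg (by omega), genFib_of_le (n := n - (k - 1)) (by omega) (by omega),
    show n - (k - 1) - 1 = n - k by omega, show n - (k - 1) - k = n - (2 * k - 1) by omega]
  obtain ⟨j, rfl⟩ : ∃ j, k = j + 1 := ⟨k - 1, by omega⟩
  rw [Nat.add_sub_cancel]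
  ring
end

section
/- For integers k ≥ 2 and n ≥ 3k, F(k, n+k) + F(k, n-k) = F(k, n-k) + F(k, n) + ∑_{i=0}^{k-1} F(k, n-i). -/
/-! The recurrence `F(k, m+1) = F(k, m) + F(k, m+1-k)` holds for every `m`, not only for
`m + 1 ≥ k`: below `k` the truncated index `m + 1 - k` is `0` and `F(k, 0) = 1`. Summing it
over `k` consecutive steps gives `F(k, n+k) = F(k, n) + ∑_{i<k} F(k, n-i)`, which is the
identity after adding `F(k, n-k)` to both sides. -/

theorem genFib_zero_left (n : ℕ) : genFib 0 n = 0 := by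
  rw [genFib]
  simp

theorem genFib_of_lt {k n : ℕ} (h : n < k) : genFib k n = n + 1 := by
  rw [genFib, dif_pos h]

theorem genFib_succ (k m : ℕ) : genFib k (m + 1) = genFib k m + genFib k (m + 1 - k) := by
  rcases Nat.eq_zero_or_pos k with rfl | hk
  · simp only [genFib_zero_left]
  by_cases hlt : m + 1 < k
  · rw [Nat.sub_eq_zero_of_le hlt.le, genFib_of_lt hlt, genFib_of_lt (by omega), genFib_of_lt hk]
  · rw [genFib, dif_neg hlt, dif_neg hk.ne', Nat.add_sub_cancel]

theorem genFib_add (k n j : ℕ) :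
    genFib k (n + j) = genFib k n + ∑ i ∈ Finset.range j, genFib k (n + i + 1 - k) := by
  induction j with
  | zero => simp
  | succ j ih => rw [← add_assoc, genFib_succ, ih, Finset.sum_range_succ, add_assoc]

theorem genFib_add_self (k n : ℕ) :
    genFib k (n + k) = genFib k n + ∑ i ∈ Finset.range k, genFib k (n - i) := by
  rw [genFib_add, ← Finset.sum_range_reflect]
  congr 1
  refine Finset.sum_congr rfl fun i hi => ?_
  rw [Finset.mem_range] at hi
  congr 1
  omega

theorem stmt14_general (k n : ℕ) :
    genFib k (n + k) + genFib k (n - k)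
      = genFib k (n - k) + genFib k n + ∑ i ∈ Finset.range k, genFib k (n - i) := by
  rw [genFib_add_self]
  ring

theorem stmt14 (k n : ℕ) (hk : 2 ≤ k) (hn : 3 * k ≤ n) :
    genFib k (n + k) + genFib k (n - k)
      = genFib k (n - k) + genFib k n + ∑ i ∈ Finset.range k, genFib k (n - i) :=
  stmt14_general k n
end
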